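/- Let Ω = B₁(0) ⊂ ℝ² be the open unit disc, let f ∈ C⁰(cl(Ω)) and extend f by zero to ℝ². Define g(x₁,x₂) := ∫_{−∞}^{x₂} ∫_{−∞}^{t₂} f(x₁,s₂) ds₂ dt₂ for x₁² + x₂² = 1, define for |x₁| < 1: h(x₁,x₂) := ((g(x₁,√(1−x₁²)) − g(x₁,−√(1−x₁²)))/(2√(1−x₁²))) x₂ + (g(x₁,√(1−x₁²)) + g(x₁,−√(1−x₁²)))/2, and set u(x₁,x₂) := −h(x₁,x₂) + ∫_{−∞}^{x₂} ∫_{−∞}^{t₂} f(x₁,s₂) ds₂ dt₂ on Ω. Then u ∈ L¹_loc(Ω), u solves D²₂₂ u = f distributionally on Ω, i.e. ∫_Ω u D²₂₂φ = ∫_Ω f φ for every φ ∈ C_c^∞(Ω), and u vanishes on the boundary in the sense that for every x₁ with |x₁| < 1, u(x₁, x₂) → 0 as (x₁,x₂) ∈ Ω approaches either boundary point (x₁, ±√(1−x₁²)). -/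

import Mathlib

open MeasureTheory Filter
open scoped BigOperators ENNReal Topology NNReal

noncomputable section

abbrev Euc (n : ℕ) := EuclideanSpace ℝ (Fin n)
abbrev Mat (N n : ℕ) := EuclideanSpace ℝ (Fin N × Fin n)

variable {n N : ℕ}

/-- The nullspace of the induced symmetric linear map `A : ℝ^{N×n} → ℝ^{N×n}`. -/
def kerA (A : Fin N → Fin n → Fin N → Fin n → ℝ) : Submodule ℝ (Mat N n) where
  carrier := {Q | ∀ α i, ∑ β, ∑ j, A α i β j * Q (β, j) = 0}
  zero_mem' := by intro α i; simp
  add_mem' := by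
    intro Q R hQ hR α i
    have h : ∀ β j, (Q + R) (β, j) = Q (β, j) + R (β, j) := fun β j => rfl
    simp only [h, mul_add, Finset.sum_add_distrib]
    rw [hQ α i, hR α i, add_zero]
  smul_mem' := by
    intro c Q hQ α i
    have h : ∀ β j, (c • Q) (β, j) = c * Q (β, j) := fun β j => rfl
    have h2 : ∀ β j, A α i β j * (c * Q (β, j)) = c * (A α i β j * Q (β, j)) := by
      intro β j; ring
    simp only [h, h2, ← Finset.mul_sum]
    rw [hQ α i, mul_zero]

/-- Π = orthogonal complement of the nullspace of A (equivalently, its range). -/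
def PiSub (A : Fin N → Fin n → Fin N → Fin n → ℝ) : Submodule ℝ (Mat N n) := (kerA A)ᗮ

/-- The rank-one matrix η ⊗ a. -/
def rankOne (η : Euc N) (a : Euc n) : Mat N n :=
  WithLp.toLp 2 (fun p : Fin N × Fin n => η p.1 * a p.2)

/-- Σ = span of the vectors η such that η ⊗ a ∈ Π for some a. -/
def SigmaSub (A : Fin N → Fin n → Fin N → Fin n → ℝ) : Submodule ℝ (Euc N) :=
  Submodule.span ℝ {η : Euc N | ∃ a : Euc n, rankOne η a ∈ PiSub A}

/-- The subspace Π is spanned by rank-one matrices. -/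
def SpannedByRankOne (A : Fin N → Fin n → Fin N → Fin n → ℝ) : Prop :=
  PiSub A = Submodule.span ℝ {Q : Mat N n | Q ∈ PiSub A ∧ ∃ η a, Q = rankOne η a}

/-- Symmetry of the tensor A. -/
def IsSymmT (A : Fin N → Fin n → Fin N → Fin n → ℝ) : Prop :=
  ∀ α i β j, A α i β j = A β j α i

/-- Positive semidefiniteness of the quadratic form of A. -/
def IsPSDT (A : Fin N → Fin n → Fin N → Fin n → ℝ) : Prop :=
  ∀ Q : Mat N n, 0 ≤ ∑ α, ∑ i, ∑ β, ∑ j, A α i β j * Q (α, i) * Q (β, j)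

/-- Smooth compactly supported test maps with support in Ω. -/
def IsTest {E F : Type*} [NormedAddCommGroup E] [NormedSpace ℝ E]
    [NormedAddCommGroup F] [NormedSpace ℝ F] (Ω : Set E) (φ : E → F) : Prop :=
  ContDiff ℝ (⊤ : ℕ∞) φ ∧ HasCompactSupport φ ∧ tsupport φ ⊆ Ω

/-- Second partial derivative D²_{ij} g. -/
def pd2 {n : ℕ} (i j : Fin n) (g : Euc n → ℝ) (x : Euc n) : ℝ :=
  fderiv ℝ (fun y => fderiv ℝ g y (EuclideanSpace.single j 1)) x (EuclideanSpace.single i 1)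

/-- Distributional solution in D'(Ω, Σ) of Σ A_{αiβj} D²_{ij} u_β = f_α. -/
def IsDistSol (A : Fin N → Fin n → Fin N → Fin n → ℝ) (Ω : Set (Euc n))
    (u f : Euc n → Euc N) : Prop :=
  ∀ φ : Euc n → Euc N, IsTest Ω φ → (∀ x, φ x ∈ SigmaSub A) →
    ∫ x in Ω, (∑ α, ∑ β, ∑ i, ∑ j, A α i β j * u x β * pd2 i j (fun y => φ y α) x)
      = ∫ x in Ω, (∑ α, f x α * φ x α)

/-- Strict convexity: the boundary contains no nontrivial segment. -/
def BoundaryHasNoSegment {E : Type*} [NormedAddCommGroup E] [NormedSpace ℝ E]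
    (Ω : Set E) : Prop :=
  ∀ x y : E, x ∈ frontier Ω → y ∈ frontier Ω → segment ℝ x y ⊆ frontier Ω → x = y

/-- The gradient matrix (Du(x))_{αi} = D_i u_α (x). -/
def gradMat {n N : ℕ} (u : Euc n → Euc N) (x : Euc n) : Mat N n :=
  WithLp.toLp 2 (fun p : Fin N × Fin n => fderiv ℝ (fun y => u y p.1) x (EuclideanSpace.single p.2 1))

/-! ### Auxiliary machinery for `degenerate_equation_unit_disc` -/

namespace DegHelper

open Set Metric

def mk2 (a b : ℝ) : EuclideanSpace ℝ (Fin 2) := WithLp.toLp 2 ![a, b]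

lemma mk2_zero (a b : ℝ) : (mk2 a b) 0 = a := rfl
lemma mk2_one (a b : ℝ) : (mk2 a b) 1 = b := rfl

lemma norm_sq_eq (x : EuclideanSpace ℝ (Fin 2)) : ‖x‖ ^ 2 = (x 0) ^ 2 + (x 1) ^ 2 := by
  rw [EuclideanSpace.norm_eq, Real.sq_sqrt (by positivity)]
  simp [Fin.sum_univ_two, sq_abs]

lemma norm_mk2_sq (a b : ℝ) : ‖mk2 a b‖ ^ 2 = a ^ 2 + b ^ 2 := norm_sq_eq (mk2 a b)

lemma mem_cb_iff (x : EuclideanSpace ℝ (Fin 2)) :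
    x ∈ closedBall (0 : EuclideanSpace ℝ (Fin 2)) 1 ↔ (x 0) ^ 2 + (x 1) ^ 2 ≤ 1 := by
  rw [mem_closedBall_zero_iff, ← norm_sq_eq]
  constructor
  · intro hx; nlinarith [norm_nonneg x]
  · intro hx; nlinarith [norm_nonneg x, sq_nonneg (‖x‖ - 1)]

lemma mem_ball_iff (x : EuclideanSpace ℝ (Fin 2)) :
    x ∈ ball (0 : EuclideanSpace ℝ (Fin 2)) 1 ↔ (x 0) ^ 2 + (x 1) ^ 2 < 1 := by
  rw [mem_ball_zero_iff, ← norm_sq_eq]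
  constructor
  · intro hx; nlinarith [norm_nonneg x]
  · intro hx; nlinarith [norm_nonneg x, sq_nonneg (‖x‖ - 1)]

lemma norm_ne_one_of (a s : ℝ) (h : a ^ 2 + s ^ 2 ≠ 1) : ‖mk2 a s‖ ≠ 1 := by
  intro hc
  apply h
  rw [← norm_mk2_sq a s, hc]; norm_num

lemma continuous_mk2 : Continuous fun p : ℝ × ℝ => mk2 p.1 p.2 := by
  have h : Continuous fun p : ℝ × ℝ => (![p.1, p.2] : Fin 2 → ℝ) := by
    refine continuous_pi fun i => ?_
    fin_cases i
    · exact continuous_fst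
    · exact continuous_snd
  exact (PiLp.continuous_toLp 2 _).comp h

lemma continuous_mk2_right (a : ℝ) : Continuous fun b => mk2 a b :=
  continuous_mk2.comp (Continuous.prodMk_right (Y := ℝ) a)

section F

variable {f : EuclideanSpace ℝ (Fin 2) → ℝ} {M : ℝ}

lemma contAt_f (hf : ContinuousOn f (closedBall 0 1))
    (hf0 : ∀ x ∉ closedBall (0 : EuclideanSpace ℝ (Fin 2)) 1, f x = 0)
    {x : EuclideanSpace ℝ (Fin 2)} (hx : ‖x‖ ≠ 1) :
    ContinuousAt f x := by
  rcases lt_or_gt_of_ne hx with hlt | hgt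
  · exact hf.continuousAt (Filter.mem_of_superset
      (Metric.isOpen_ball.mem_nhds (mem_ball_zero_iff.2 hlt)) ball_subset_closedBall)
  · have hev : f =ᶠ[𝓝 x] fun _ => 0 := by
      refine Filter.eventuallyEq_of_mem
        ((isOpen_lt continuous_const continuous_norm).mem_nhds hgt) fun y hy => ?_
      exact hf0 y (by simpa [mem_closedBall_zero_iff] using not_le.2 hy)
    exact continuousAt_const.congr hev.symm

lemma slice_zero (hf0 : ∀ x ∉ closedBall (0 : EuclideanSpace ℝ (Fin 2)) 1, f x = 0) {a s : ℝ}
    (h : 1 < a ^ 2 + s ^ 2) : f (mk2 a s) = 0 :=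
  hf0 _ (fun hc => absurd ((mem_cb_iff _).1 hc) (by simpa [mk2_zero, mk2_one] using not_le.2 h))

lemma slice_aesm (hf : ContinuousOn f (closedBall 0 1))
    (hf0 : ∀ x ∉ closedBall (0 : EuclideanSpace ℝ (Fin 2)) 1, f x = 0) (a : ℝ) :
    AEStronglyMeasurable (fun s => f (mk2 a s)) volume := by
  set S : Set ℝ := {s | a ^ 2 + s ^ 2 ≤ 1} with hS
  have hScl : IsClosed S := isClosed_le (by continuity) continuous_const
  have hcont : ContinuousOn (fun s => f (mk2 a s)) S := by
    refine hf.comp (continuous_mk2_right a).continuousOn fun s hs => ?_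
    exact (mem_cb_iff _).2 (by simpa [hS, mk2_zero, mk2_one] using hs)
  have heq : (fun s => f (mk2 a s)) = S.indicator (fun s => f (mk2 a s)) := by
    funext s
    by_cases h : s ∈ S
    · rw [Set.indicator_of_mem h]
    · rw [Set.indicator_of_notMem h]
      exact slice_zero hf0 (not_le.1 h)
  rw [heq]
  exact (aestronglyMeasurable_indicator_iff hScl.measurableSet).2
    (hcont.aestronglyMeasurable hScl.measurableSet)

lemma bound_integrable {M : ℝ} {p q : ℝ} :
    Integrable ((Set.Icc p q).indicator fun _ : ℝ => M) volume := by
  rw [integrable_indicator_iff measurableSet_Icc]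
  exact integrableOn_const measure_Icc_lt_top.ne

lemma slice_bound (hf0 : ∀ x ∉ closedBall (0 : EuclideanSpace ℝ (Fin 2)) 1, f x = 0)
    (hM : ∀ x, |f x| ≤ M) (a : ℝ) (s : ℝ) :
    ‖f (mk2 a s)‖ ≤ (Set.Icc (-1 : ℝ) 1).indicator (fun _ => M) s := by
  by_cases h : s ∈ Set.Icc (-1 : ℝ) 1
  · rw [Set.indicator_of_mem h]; exact hM _
  · rw [Set.indicator_of_notMem h]
    have hs : 1 < a ^ 2 + s ^ 2 := by
      have h' : s < -1 ∨ 1 < s := by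
        by_contra hcon
        push_neg at hcon
        exact h ⟨hcon.1, hcon.2⟩
      rcases h' with h1 | h1 <;> nlinarith [sq_nonneg a]
    simp [slice_zero hf0 hs]

lemma slice_integrable (hf : ContinuousOn f (closedBall 0 1))
    (hf0 : ∀ x ∉ closedBall (0 : EuclideanSpace ℝ (Fin 2)) 1, f x = 0)
    (hM : ∀ x, |f x| ≤ M) (a : ℝ) :
    Integrable (fun s => f (mk2 a s)) volume :=
  Integrable.mono' bound_integrable (slice_aesm hf hf0 a)
    (ae_of_all _ (slice_bound hf0 hM a))

/-- The inner primitive `G(a,t) = ∫_{-∞}^t f(a,s) ds`. -/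
def Gg (f : EuclideanSpace ℝ (Fin 2) → ℝ) (a t : ℝ) : ℝ := ∫ s in Set.Iic t, f (mk2 a s)

lemma G_bound (hf : ContinuousOn f (closedBall 0 1))
    (hf0 : ∀ x ∉ closedBall (0 : EuclideanSpace ℝ (Fin 2)) 1, f x = 0)
    (hM : ∀ x, |f x| ≤ M) (a t : ℝ) : ‖Gg f a t‖ ≤ 2 * M := by
  have hint := slice_integrable hf hf0 hM a
  have h1 : ‖Gg f a t‖ ≤ ∫ s in Set.Iic t, ‖f (mk2 a s)‖ := norm_integral_le_integral_norm _
  have h2 : (∫ s in Set.Iic t, ‖f (mk2 a s)‖) ≤ ∫ s : ℝ, ‖f (mk2 a s)‖ :=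
    setIntegral_le_integral hint.norm (ae_of_all _ fun s => norm_nonneg _)
  have h3 : (∫ s : ℝ, ‖f (mk2 a s)‖) ≤ ∫ s : ℝ, (Set.Icc (-1 : ℝ) 1).indicator (fun _ => M) s :=
    integral_mono hint.norm bound_integrable (slice_bound hf0 hM a)
  have h4 : (∫ s : ℝ, (Set.Icc (-1 : ℝ) 1).indicator (fun _ => M) s) = 2 * M := by
    rw [integral_indicator measurableSet_Icc]
    simp [Real.volume_Icc]
    norm_num
  linarith

lemma G_zero (hf0 : ∀ x ∉ closedBall (0 : EuclideanSpace ℝ (Fin 2)) 1, f x = 0)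
    {a t : ℝ} (ht : t ≤ -1) : Gg f a t = 0 := by
  refine setIntegral_eq_zero_of_ae_eq_zero ?_
  rw [ae_iff]
  refine measure_mono_null (fun s hs => ?_) (measure_singleton (-1 : ℝ))
  simp only [Set.mem_setOf_eq, not_forall] at hs
  obtain ⟨hs1, hs2⟩ := hs
  have h1 : a ^ 2 + s ^ 2 ≤ 1 := by
    by_contra hcon
    exact hs2 (slice_zero hf0 (not_le.1 hcon))
  have hsle : s ≤ -1 := le_trans hs1 ht
  have : s = -1 := le_antisymm hsle (by nlinarith [sq_nonneg (s + 1), sq_nonneg a])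
  simp [this]

lemma sphere_slice_null (a : ℝ) :
    volume {s : ℝ | a ^ 2 + s ^ 2 = 1} = 0 := by
  refine measure_mono_null (fun s hs => ?_)
    (((Set.finite_singleton (-Real.sqrt (1 - a ^ 2))).insert
      (Real.sqrt (1 - a ^ 2))).measure_zero volume)
  have h1 : s ^ 2 = 1 - a ^ 2 := by have := hs; simp only [Set.mem_setOf_eq] at this; linarith
  have h2 : Real.sqrt (1 - a ^ 2) = |s| := by rw [← h1, Real.sqrt_sq_eq_abs]
  rcases abs_cases s with ⟨h3, _⟩ | ⟨h3, _⟩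
  · left; rw [h2, h3]
  · right; simp only [Set.mem_singleton_iff]; rw [h2, h3]; ring

lemma G_cont (hf : ContinuousOn f (closedBall 0 1))
    (hf0 : ∀ x ∉ closedBall (0 : EuclideanSpace ℝ (Fin 2)) 1, f x = 0)
    (hM : ∀ x, |f x| ≤ M) :
    Continuous fun p : ℝ × ℝ => Gg f p.1 p.2 := by
  rw [continuous_iff_continuousAt]
  intro p₀
  have rep : (fun p : ℝ × ℝ => Gg f p.1 p.2)
      = fun p => ∫ s, (Set.Iic p.2).indicator (fun s' => f (mk2 p.1 s')) s := by
    funext p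
    rw [Gg, ← integral_indicator measurableSet_Iic]
  rw [rep]
  refine continuousAt_of_dominated ?_ ?_ (bound_integrable (M := M) (p := -1) (q := 1)) ?_
  · exact Filter.Eventually.of_forall fun p =>
      (slice_aesm hf hf0 p.1).indicator measurableSet_Iic
  · refine Filter.Eventually.of_forall fun p => ae_of_all _ fun s => ?_
    calc ‖(Set.Iic p.2).indicator (fun s' => f (mk2 p.1 s')) s‖
        ≤ ‖f (mk2 p.1 s)‖ := norm_indicator_le_norm_self _ _
      _ ≤ (Set.Icc (-1 : ℝ) 1).indicator (fun _ => M) s := slice_bound hf0 hM p.1 s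
  · have hbad : volume ({p₀.2} ∪ {s : ℝ | p₀.1 ^ 2 + s ^ 2 = 1}) = 0 :=
      measure_union_null (measure_singleton _) (sphere_slice_null p₀.1)
    refine Filter.eventually_of_mem (compl_mem_ae_iff.2 hbad) fun s hs => ?_
    simp only [Set.compl_union, Set.mem_inter_iff, Set.mem_compl_iff,
      Set.mem_singleton_iff, Set.mem_setOf_eq] at hs
    rcases lt_or_gt_of_ne hs.1 with hlt | hgt
    · have hcb : ContinuousAt (fun p : ℝ × ℝ => f (mk2 p.1 s)) p₀ := by
        have h1 : ContinuousAt f (mk2 p₀.1 s) :=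
          contAt_f hf hf0 (norm_ne_one_of _ _ hs.2)
        have hm : Continuous fun p : ℝ × ℝ => mk2 p.1 s := by
          have hpi : Continuous fun p : ℝ × ℝ => (![p.1, s] : Fin 2 → ℝ) := by
            refine continuous_pi fun i => ?_
            fin_cases i
            · exact continuous_fst
            · exact continuous_const
          exact (PiLp.continuous_toLp 2 _).comp hpi
        exact ContinuousAt.comp (x := p₀) h1 hm.continuousAt
      refine hcb.congr ?_
      refine Filter.eventuallyEq_of_mem
        ((isOpen_lt continuous_const continuous_snd).mem_nhds (show s < p₀.2 from hlt))
        fun p hp => ?_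
      exact (Set.indicator_of_mem (Set.mem_Iic.2 (le_of_lt (show s < p.2 from hp)))
        (fun s' => f (mk2 p.1 s'))).symm
    · refine ContinuousAt.congr (continuousAt_const : ContinuousAt (fun _ : ℝ × ℝ => (0:ℝ)) p₀) ?_
      refine Filter.eventuallyEq_of_mem
        ((isOpen_lt continuous_snd continuous_const).mem_nhds (show p₀.2 < s from hgt))
        fun p hp => ?_
      exact (Set.indicator_of_notMem
        (fun hc => absurd (Set.mem_Iic.1 hc) (not_le.2 (show p.2 < s from hp)))
        (fun s' => f (mk2 p.1 s'))).symm

lemma G_cont_right (hf : ContinuousOn f (closedBall 0 1))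
    (hf0 : ∀ x ∉ closedBall (0 : EuclideanSpace ℝ (Fin 2)) 1, f x = 0)
    (hM : ∀ x, |f x| ≤ M) (a : ℝ) : Continuous (Gg f a) := by
  have h := (G_cont hf hf0 hM).comp (Continuous.prodMk_right (Y := ℝ) a)
  exact h

lemma G_integrableOn_Iic (hf : ContinuousOn f (closedBall 0 1))
    (hf0 : ∀ x ∉ closedBall (0 : EuclideanSpace ℝ (Fin 2)) 1, f x = 0)
    (hM : ∀ x, |f x| ≤ M) (a b : ℝ) :
    IntegrableOn (Gg f a) (Set.Iic b) volume := by
  refine Integrable.mono' (Integrable.restrict (bound_integrable (M := 2*M) (p := -1) (q := b)))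
    ((G_cont_right hf hf0 hM a).aestronglyMeasurable.restrict) ?_
  refine (ae_restrict_iff' measurableSet_Iic).2 (ae_of_all _ fun t ht => ?_)
  by_cases h : t ∈ Set.Icc (-1 : ℝ) b
  · rw [Set.indicator_of_mem h]; exact G_bound hf hf0 hM a t
  · rw [Set.indicator_of_notMem h]
    have h1 : t ≤ -1 := by
      rcases not_and_or.1 (fun hc => h (Set.mem_Icc.2 hc)) with h1 | h1
      · linarith [not_le.1 h1]
      · exact absurd (Set.mem_Iic.1 ht) h1
    simp [G_zero hf0 h1]

lemma F_rep (hf : ContinuousOn f (closedBall 0 1))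
    (hf0 : ∀ x ∉ closedBall (0 : EuclideanSpace ℝ (Fin 2)) 1, f x = 0)
    (hM : ∀ x, |f x| ≤ M) (a x : ℝ) :
    ∫ t in Set.Iic x, Gg f a t = ∫ t in (-2 : ℝ)..x, Gg f a t := by
  have h0 : ∫ t in Set.Iic (-2 : ℝ), Gg f a t = 0 :=
    setIntegral_eq_zero_of_forall_eq_zero fun t ht =>
      G_zero hf0 (le_trans (Set.mem_Iic.1 ht) (by norm_num))
  have h := intervalIntegral.integral_Iic_sub_Iic
    (G_integrableOn_Iic hf hf0 hM a (-2)) (G_integrableOn_Iic hf hf0 hM a x)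
  linarith

lemma F_FTC (hf : ContinuousOn f (closedBall 0 1))
    (hf0 : ∀ x ∉ closedBall (0 : EuclideanSpace ℝ (Fin 2)) 1, f x = 0)
    (hM : ∀ x, |f x| ≤ M) (a b : ℝ) :
    HasDerivAt (fun x => ∫ t in Set.Iic x, Gg f a t) (Gg f a b) b := by
  have hk : (fun x => ∫ t in Set.Iic x, Gg f a t) = fun x => ∫ t in (-2 : ℝ)..x, Gg f a t :=
    funext (F_rep hf hf0 hM a)
  rw [hk]
  exact intervalIntegral.integral_hasDerivAt_right
    ((G_cont_right hf hf0 hM a).intervalIntegrable _ _)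
    ((G_cont_right hf hf0 hM a).stronglyMeasurableAtFilter _ _)
    (G_cont_right hf hf0 hM a).continuousAt

lemma G_rep (hf : ContinuousOn f (closedBall 0 1))
    (hf0 : ∀ x ∉ closedBall (0 : EuclideanSpace ℝ (Fin 2)) 1, f x = 0)
    (hM : ∀ x, |f x| ≤ M) (a x : ℝ) :
    Gg f a x = ∫ s in (-2 : ℝ)..x, f (mk2 a s) := by
  have h0 : ∫ s in Set.Iic (-2 : ℝ), f (mk2 a s) = 0 := by
    refine setIntegral_eq_zero_of_forall_eq_zero fun s hs => ?_
    have h3 : s ≤ -2 := Set.mem_Iic.1 hs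
    exact slice_zero hf0 (by nlinarith [sq_nonneg a])
  have h := intervalIntegral.integral_Iic_sub_Iic
    ((slice_integrable hf hf0 hM a).integrableOn (s := Set.Iic (-2:ℝ)))
    ((slice_integrable hf hf0 hM a).integrableOn (s := Set.Iic x))
  rw [Gg]
  linarith

lemma G_FTC (hf : ContinuousOn f (closedBall 0 1))
    (hf0 : ∀ x ∉ closedBall (0 : EuclideanSpace ℝ (Fin 2)) 1, f x = 0)
    (hM : ∀ x, |f x| ≤ M) {a s : ℝ} (h : a ^ 2 + s ^ 2 ≠ 1) :
    HasDerivAt (Gg f a) (f (mk2 a s)) s := by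
  have hk : Gg f a = fun x => ∫ s' in (-2 : ℝ)..x, f (mk2 a s') :=
    funext (G_rep hf hf0 hM a)
  rw [hk]
  refine intervalIntegral.integral_hasDerivAt_right
    ((slice_integrable hf hf0 hM a).intervalIntegrable)
    ⟨Set.univ, Filter.univ_mem, (slice_aesm hf hf0 a).restrict⟩ ?_
  exact (contAt_f hf hf0 (norm_ne_one_of a s h)).comp (continuous_mk2_right a).continuousAt

lemma F_cont (hf : ContinuousOn f (closedBall 0 1))
    (hf0 : ∀ x ∉ closedBall (0 : EuclideanSpace ℝ (Fin 2)) 1, f x = 0)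
    (hM : ∀ x, |f x| ≤ M) :
    Continuous fun p : ℝ × ℝ => ∫ t in Set.Iic p.2, Gg f p.1 t := by
  rw [continuous_iff_continuousAt]
  intro p₀
  have rep : (fun p : ℝ × ℝ => ∫ t in Set.Iic p.2, Gg f p.1 t)
      = fun p => ∫ t, (Set.Iic p.2).indicator (Gg f p.1) t := by
    funext p; rw [← integral_indicator measurableSet_Iic]
  rw [rep]
  refine continuousAt_of_dominated ?_ ?_
    (bound_integrable (M := 2 * M) (p := -1) (q := p₀.2 + 1)) ?_
  · exact Filter.Eventually.of_forall fun p =>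
      (G_cont_right hf hf0 hM p.1).aestronglyMeasurable.indicator measurableSet_Iic
  · refine Filter.eventually_of_mem
      ((isOpen_lt continuous_snd continuous_const).mem_nhds
        (show p₀.2 < p₀.2 + 1 by linarith)) fun p hp => ae_of_all _ fun t => ?_
    by_cases h : t ∈ Set.Icc (-1 : ℝ) (p₀.2 + 1)
    · rw [Set.indicator_of_mem h]
      exact le_trans (norm_indicator_le_norm_self _ _) (G_bound hf hf0 hM p.1 t)
    · rw [Set.indicator_of_notMem h]
      rcases not_and_or.1 (fun hc => h (Set.mem_Icc.2 hc)) with h1 | h1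
      · have h2 : t ≤ -1 := by linarith [not_le.1 h1]
        calc ‖(Set.Iic p.2).indicator (Gg f p.1) t‖ ≤ ‖Gg f p.1 t‖ :=
              norm_indicator_le_norm_self _ _
          _ ≤ 0 := by rw [G_zero hf0 h2]; simp
      · have h2 : p₀.2 + 1 < t := not_le.1 h1
        rw [Set.indicator_of_notMem
          (fun hc => absurd (Set.mem_Iic.1 hc) (not_le.2 (by
            have h3 : p.2 < p₀.2 + 1 := hp
            linarith)))]
        simp
  · refine Filter.eventually_of_mem (compl_mem_ae_iff.2 (measure_singleton p₀.2)) fun t ht => ?_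
    have htne : t ≠ p₀.2 := ht
    rcases lt_or_gt_of_ne htne with hlt | hgt
    · have hm : Continuous fun p : ℝ × ℝ => ((p.1, t) : ℝ × ℝ) :=
        continuous_fst.prodMk continuous_const
      have hcb : ContinuousAt (fun p : ℝ × ℝ => Gg f p.1 t) p₀ := by
        have h2 := ContinuousAt.comp (x := p₀) ((G_cont hf hf0 hM).continuousAt) hm.continuousAt
        exact h2
      refine hcb.congr ?_
      refine Filter.eventuallyEq_of_mem
        ((isOpen_lt continuous_const continuous_snd).mem_nhds (show t < p₀.2 from hlt))
        fun p hp => ?_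
      exact (Set.indicator_of_mem (Set.mem_Iic.2 (le_of_lt (show t < p.2 from hp)))
        (Gg f p.1)).symm
    · refine ContinuousAt.congr (continuousAt_const : ContinuousAt (fun _ : ℝ × ℝ => (0:ℝ)) p₀) ?_
      refine Filter.eventuallyEq_of_mem
        ((isOpen_lt continuous_snd continuous_const).mem_nhds (show p₀.2 < t from hgt))
        fun p hp => ?_
      exact (Set.indicator_of_notMem
        (fun hc => absurd (Set.mem_Iic.1 hc) (not_le.2 (show p.2 < t from hp))) (Gg f p.1)).symm

end F

section Phi

def psi (φ : EuclideanSpace ℝ (Fin 2) → ℝ) (y : EuclideanSpace ℝ (Fin 2)) : ℝ :=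
  fderiv ℝ φ y (EuclideanSpace.single (1 : Fin 2) 1)

variable {φ : EuclideanSpace ℝ (Fin 2) → ℝ}

lemma fderiv_zero_of_nmem (y : EuclideanSpace ℝ (Fin 2)) (hy : y ∉ tsupport φ) :
    fderiv ℝ φ y = 0 := by
  have hev : φ =ᶠ[𝓝 y] fun _ => 0 := notMem_tsupport_iff_eventuallyEq.1 hy
  rw [hev.fderiv_eq]
  exact fderiv_const_apply 0

lemma psi_zero_of_nmem (y : EuclideanSpace ℝ (Fin 2)) (hy : y ∉ tsupport φ) : psi φ y = 0 := by
  rw [psi, fderiv_zero_of_nmem y hy]; rfl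

lemma pd2_zero_of_nmem (x : EuclideanSpace ℝ (Fin 2)) (hx : x ∉ tsupport φ) :
    pd2 1 1 φ x = 0 := by
  have hev : (fun y => fderiv ℝ φ y (EuclideanSpace.single (1 : Fin 2) 1)) =ᶠ[𝓝 x]
      fun _ => 0 := by
    refine Filter.eventuallyEq_of_mem
      ((isOpen_compl_iff.2 (isClosed_tsupport φ)).mem_nhds hx) fun y hy => ?_
    rw [fderiv_zero_of_nmem y hy]; rfl
  rw [pd2, hev.fderiv_eq, fderiv_const_apply 0]; rfl

lemma psi_contDiff (hφ : ContDiff ℝ (⊤ : ℕ∞) φ) : ContDiff ℝ (⊤ : ℕ∞) (psi φ) :=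
  (hφ.fderiv_right (by simp)).clm_apply contDiff_const

lemma pd2_cont (hφ : ContDiff ℝ (⊤ : ℕ∞) φ) : Continuous (pd2 1 1 φ) := by
  have h1 : ContDiff ℝ (⊤ : ℕ∞) (fderiv ℝ (psi φ)) := (psi_contDiff hφ).fderiv_right (by simp)
  exact h1.continuous.clm_apply continuous_const

lemma hasDerivAt_mk2 (a t : ℝ) :
    HasDerivAt (fun t => mk2 a t) (EuclideanSpace.single (1 : Fin 2) 1) t := by
  have hrep : (fun t => mk2 a t)
      = fun t => mk2 a 0 + t • EuclideanSpace.single (1 : Fin 2) (1 : ℝ) := by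
    funext t
    ext i
    fin_cases i <;>
      simp [mk2, PiLp.add_apply, PiLp.smul_apply, EuclideanSpace.single_apply]
  rw [hrep]
  simpa using ((hasDerivAt_id t).smul_const
    (EuclideanSpace.single (1 : Fin 2) (1 : ℝ))).const_add (mk2 a 0)

lemma hasDerivAt_slice_phi (hφ : ContDiff ℝ (⊤ : ℕ∞) φ) (a t : ℝ) :
    HasDerivAt (fun t => φ (mk2 a t)) (psi φ (mk2 a t)) t := by
  have h := ((hφ.differentiable (by simp)) (mk2 a t)).hasFDerivAt.comp_hasDerivAt t
    (hasDerivAt_mk2 a t)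
  exact h

lemma hasDerivAt_slice_psi (hφ : ContDiff ℝ (⊤ : ℕ∞) φ) (a t : ℝ) :
    HasDerivAt (fun t => psi φ (mk2 a t)) (pd2 1 1 φ (mk2 a t)) t := by
  have h := (((psi_contDiff hφ).differentiable (by simp)) (mk2 a t)).hasFDerivAt.comp_hasDerivAt t
    (hasDerivAt_mk2 a t)
  exact h

end Phi

section Transfer

def T2 : (ℝ × ℝ) ≃ᵐ EuclideanSpace ℝ (Fin 2) :=
  (MeasurableEquiv.finTwoArrow.symm).trans (MeasurableEquiv.toLp 2 (Fin 2 → ℝ)).symm.symm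

lemma T2_mp : MeasurePreserving T2 volume volume := by
  have h := MeasurePreserving.comp
    (MeasurePreserving.symm (MeasurableEquiv.toLp 2 (Fin 2 → ℝ)).symm
      (EuclideanSpace.volume_preserving_symm_measurableEquiv_toLp (Fin 2)))
    (MeasurePreserving.symm MeasurableEquiv.finTwoArrow (volume_preserving_finTwoArrow ℝ))
  exact h

lemma T2_apply (p : ℝ × ℝ) : T2 p = mk2 p.1 p.2 := by
  ext i
  fin_cases i <;>
    simp [T2, mk2, MeasurableEquiv.finTwoArrow, MeasurableEquiv.toLp] <;> rfl

lemma integral_eq_prod (H : EuclideanSpace ℝ (Fin 2) → ℝ) :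
    ∫ x, H x = ∫ p : ℝ × ℝ, H (mk2 p.1 p.2) := by
  rw [← T2_mp.integral_comp T2.measurableEmbedding H]
  simp only [T2_apply]

lemma integrable_prod_of {H : EuclideanSpace ℝ (Fin 2) → ℝ} (h : Integrable H volume) :
    Integrable (fun p : ℝ × ℝ => H (mk2 p.1 p.2)) volume := by
  have h2 := (T2_mp.integrable_comp_emb T2.measurableEmbedding).2 h
  have h3 : (H ∘ T2) = fun p : ℝ × ℝ => H (mk2 p.1 p.2) := by
    funext p; simp [Function.comp, T2_apply]
  rwa [h3] at h2

lemma double_integral (H : EuclideanSpace ℝ (Fin 2) → ℝ) (h : Integrable H volume) :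
    ∫ x, H x = ∫ a : ℝ, ∫ b : ℝ, H (mk2 a b) := by
  rw [integral_eq_prod H]
  exact MeasureTheory.integral_prod _ (integrable_prod_of h)

end Transfer

end DegHelper

set_option maxHeartbeats 2000000

theorem degenerate_equation_unit_disc
    (f : EuclideanSpace ℝ (Fin 2) → ℝ)
    (hf : ContinuousOn f (Metric.closedBall 0 1))
    (hf0 : ∀ x ∉ Metric.closedBall (0 : EuclideanSpace ℝ (Fin 2)) 1, f x = 0)
    (F : ℝ → ℝ → ℝ)
    (hF : F = fun x₁ x₂ => ∫ t in Set.Iic x₂, ∫ s in Set.Iic t,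
      f (WithLp.toLp 2 ![x₁, s] : EuclideanSpace ℝ (Fin 2)))
    (h : ℝ → ℝ → ℝ)
    (hh : h = fun x₁ x₂ =>
      ((F x₁ (Real.sqrt (1 - x₁ ^ 2)) - F x₁ (-Real.sqrt (1 - x₁ ^ 2)))
          / (2 * Real.sqrt (1 - x₁ ^ 2))) * x₂
        + (F x₁ (Real.sqrt (1 - x₁ ^ 2)) + F x₁ (-Real.sqrt (1 - x₁ ^ 2))) / 2)
    (u : EuclideanSpace ℝ (Fin 2) → ℝ)
    (hu : u = fun x => - h (x 0) (x 1) + F (x 0) (x 1)) :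
    LocallyIntegrableOn u (Metric.ball 0 1) volume ∧
    (∀ φ : EuclideanSpace ℝ (Fin 2) → ℝ, IsTest (Metric.ball 0 1) φ →
      ∫ x in Metric.ball (0 : EuclideanSpace ℝ (Fin 2)) 1, u x * pd2 1 1 φ x
        = ∫ x in Metric.ball (0 : EuclideanSpace ℝ (Fin 2)) 1, f x * φ x) ∧
    (∀ x₁ : ℝ, |x₁| < 1 →
      Filter.Tendsto u
        (nhdsWithin (WithLp.toLp 2 ![x₁, Real.sqrt (1 - x₁ ^ 2)] : EuclideanSpace ℝ (Fin 2))
          (Metric.ball 0 1)) (nhds 0) ∧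
      Filter.Tendsto u
        (nhdsWithin (WithLp.toLp 2 ![x₁, -Real.sqrt (1 - x₁ ^ 2)] : EuclideanSpace ℝ (Fin 2))
          (Metric.ball 0 1)) (nhds 0)) := by
  classical
  obtain ⟨C, hC⟩ :=
    (isCompact_closedBall (0 : EuclideanSpace ℝ (Fin 2)) 1).exists_bound_of_continuousOn hf
  have hM : ∀ x, |f x| ≤ max C 0 := by
    intro x
    by_cases hx : x ∈ Metric.closedBall (0 : EuclideanSpace ℝ (Fin 2)) 1
    · exact le_trans (by simpa using hC x hx) (le_max_left _ _)
    · rw [hf0 x hx]; simp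
  set M : ℝ := max C 0 with hMdef
  have hFeq : F = fun a b => ∫ t in Set.Iic b, DegHelper.Gg f a t := hF
  have hFpair : Continuous fun pr : ℝ × ℝ => F pr.1 pr.2 := by
    rw [hFeq]; exact DegHelper.F_cont hf hf0 hM
  have hcps : Continuous fun a : ℝ => Real.sqrt (1 - a ^ 2) :=
    Real.continuous_sqrt.comp (by continuity)
  -- continuity of u at interior vertical strips
  have hucontAt : ∀ p : EuclideanSpace ℝ (Fin 2), |p 0| < 1 → ContinuousAt u p := by
    intro p hp
    have h0 : ContinuousAt (fun x : EuclideanSpace ℝ (Fin 2) => x 0) p :=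
      ((continuous_apply (0 : Fin 2)).comp (PiLp.continuous_ofLp 2 _)).continuousAt
    have h1 : ContinuousAt (fun x : EuclideanSpace ℝ (Fin 2) => x 1) p :=
      ((continuous_apply (1 : Fin 2)).comp (PiLp.continuous_ofLp 2 _)).continuousAt
    have hp2 : (p 0) ^ 2 < 1 := by
      rcases abs_lt.1 hp with ⟨ha, hb⟩; nlinarith
    have hcz : (2 : ℝ) * Real.sqrt (1 - (p 0) ^ 2) ≠ 0 := by
      have h2 := Real.sqrt_pos.2 (by linarith : (0:ℝ) < 1 - (p 0) ^ 2)
      positivity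
    have hA : ContinuousAt
        (fun x : EuclideanSpace ℝ (Fin 2) => F (x 0) (Real.sqrt (1 - (x 0) ^ 2))) p := by
      have hg : Continuous fun a : ℝ => F a (Real.sqrt (1 - a ^ 2)) := by
        have h2 := hFpair.comp (continuous_id.prodMk hcps); exact h2
      have h2 := ContinuousAt.comp (x := p) hg.continuousAt h0
      exact h2
    have hB : ContinuousAt
        (fun x : EuclideanSpace ℝ (Fin 2) => F (x 0) (-Real.sqrt (1 - (x 0) ^ 2))) p := by
      have hg : Continuous fun a : ℝ => F a (-Real.sqrt (1 - a ^ 2)) := by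
        have h2 := hFpair.comp (continuous_id.prodMk hcps.neg); exact h2
      have h2 := ContinuousAt.comp (x := p) hg.continuousAt h0
      exact h2
    have hC2 : ContinuousAt (fun x : EuclideanSpace ℝ (Fin 2) => F (x 0) (x 1)) p := by
      have h2 := ContinuousAt.comp (x := p) hFpair.continuousAt (h0.prodMk h1)
      exact h2
    have hD : ContinuousAt
        (fun x : EuclideanSpace ℝ (Fin 2) => Real.sqrt (1 - (x 0) ^ 2)) p := by
      have h2 := ContinuousAt.comp (x := p) hcps.continuousAt h0
      exact h2
    rw [hu, hh]
    exact ((((hA.sub hB).div (continuousAt_const.mul hD) hcz).mul h1).add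
      ((hA.add hB).div_const 2)).neg.add hC2
  have habs : ∀ x : EuclideanSpace ℝ (Fin 2),
      x ∈ Metric.ball (0 : EuclideanSpace ℝ (Fin 2)) 1 → |x 0| < 1 := by
    intro x hx
    have h2 := (DegHelper.mem_ball_iff x).1 hx
    exact abs_lt.2 ⟨by nlinarith [sq_nonneg (x 1)], by nlinarith [sq_nonneg (x 1)]⟩
  refine ⟨?_, ?_, ?_⟩
  · -- local integrability
    have hcont : ContinuousOn u (Metric.ball (0 : EuclideanSpace ℝ (Fin 2)) 1) :=
      fun x hx => (hucontAt x (habs x hx)).continuousWithinAt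
    exact hcont.locallyIntegrableOn measurableSet_ball
  · -- distributional identity
    intro φ hφt
    obtain ⟨hφs, hφc, hφsupp⟩ := hφt
    have hKc : IsCompact (tsupport φ) := hφc
    obtain ⟨r, hr0, hr1, hrK⟩ : ∃ r : ℝ, 0 ≤ r ∧ r < 1 ∧
        tsupport φ ⊆ Metric.closedBall 0 r := by
      rcases (tsupport φ).eq_empty_or_nonempty with hK | hK
      · exact ⟨0, le_refl _, one_pos, by simp [hK]⟩
      · obtain ⟨x₀, hx₀K, hmax⟩ := hKc.exists_isMaxOn hK continuous_norm.continuousOn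
        exact ⟨‖x₀‖, norm_nonneg _, mem_ball_zero_iff.1 (hφsupp hx₀K),
          fun y hy => mem_closedBall_zero_iff.2 (hmax hy)⟩
    have hpd2K : ∀ x ∉ tsupport φ, pd2 1 1 φ x = 0 :=
      fun x hx => DegHelper.pd2_zero_of_nmem x hx
    have hb1 : ∫ x in Metric.ball (0 : EuclideanSpace ℝ (Fin 2)) 1, u x * pd2 1 1 φ x
        = ∫ x, u x * pd2 1 1 φ x :=
      setIntegral_eq_integral_of_forall_compl_eq_zero fun x hx => by
        rw [hpd2K x fun hxK => hx (hφsupp hxK), mul_zero]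
    have hb2 : ∫ x in Metric.ball (0 : EuclideanSpace ℝ (Fin 2)) 1, f x * φ x
        = ∫ x, f x * φ x :=
      setIntegral_eq_integral_of_forall_compl_eq_zero fun x hx => by
        rw [image_eq_zero_of_notMem_tsupport fun hxK => hx (hφsupp hxK), mul_zero]
    have hHuCont : Continuous fun x => u x * pd2 1 1 φ x := by
      refine continuous_iff_continuousAt.2 fun x => ?_
      by_cases hx : x ∈ tsupport φ
      · exact (hucontAt x (habs x (hφsupp hx))).mul (DegHelper.pd2_cont hφs).continuousAt
      · refine ContinuousAt.congr
          (continuousAt_const : ContinuousAt (fun _ => (0:ℝ)) x) ?_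
        refine Filter.eventuallyEq_of_mem
          (((isClosed_tsupport φ).isOpen_compl).mem_nhds hx) fun y hy => ?_
        exact (by rw [hpd2K y hy, mul_zero] : u y * pd2 1 1 φ y = 0).symm
    have hHfCont : Continuous fun x => f x * φ x := by
      refine continuous_iff_continuousAt.2 fun x => ?_
      by_cases hx : x ∈ tsupport φ
      · exact (DegHelper.contAt_f hf hf0
          (ne_of_lt (mem_ball_zero_iff.1 (hφsupp hx)))).mul hφs.continuous.continuousAt
      · refine ContinuousAt.congr
          (continuousAt_const : ContinuousAt (fun _ => (0:ℝ)) x) ?_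
        refine Filter.eventuallyEq_of_mem
          (((isClosed_tsupport φ).isOpen_compl).mem_nhds hx) fun y hy => ?_
        exact (by rw [image_eq_zero_of_notMem_tsupport hy, mul_zero] : f y * φ y = 0).symm
    have hHuCS : HasCompactSupport fun x => u x * pd2 1 1 φ x :=
      HasCompactSupport.intro hKc fun x hx => by rw [hpd2K x hx, mul_zero]
    have hHfCS : HasCompactSupport fun x => f x * φ x :=
      HasCompactSupport.intro hKc fun x hx => by
        rw [image_eq_zero_of_notMem_tsupport hx, mul_zero]
    have hHuInt : Integrable (fun x => u x * pd2 1 1 φ x) volume :=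
      hHuCont.integrable_of_hasCompactSupport hHuCS
    have hHfInt : Integrable (fun x => f x * φ x) volume :=
      hHfCont.integrable_of_hasCompactSupport hHfCS
    rw [hb1, hb2, DegHelper.double_integral _ hHuInt, DegHelper.double_integral _ hHfInt]
    refine integral_congr_ae (Filter.Eventually.of_forall fun a => ?_)
    by_cases ham : a ^ 2 < (r ^ 2 + 1) / 2
    · -- main slice computation
      set q := Real.sqrt ((r ^ 2 + 1) / 2 - a ^ 2) with hqdef
      have hq2 : q ^ 2 = (r ^ 2 + 1) / 2 - a ^ 2 := Real.sq_sqrt (by linarith)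
      have hq0 : 0 < q := Real.sqrt_pos.2 (by linarith)
      have hKq : ∀ t : ℝ, DegHelper.mk2 a t ∈ tsupport φ → t ∈ Set.Ioo (-q) q := by
        intro t ht
        have h1 : ‖DegHelper.mk2 a t‖ ≤ r := mem_closedBall_zero_iff.1 (hrK ht)
        have h2 : a ^ 2 + t ^ 2 ≤ r ^ 2 := by
          nlinarith [DegHelper.norm_mk2_sq a t, norm_nonneg (DegHelper.mk2 a t)]
        have ht2 : t ^ 2 < q ^ 2 := by nlinarith
        constructor
        · nlinarith [sq_nonneg (t + q)]
        · nlinarith [sq_nonneg (t - q)]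
      have hnotK : ∀ t : ℝ, t ∉ Set.Ioo (-q) q → DegHelper.mk2 a t ∉ tsupport φ :=
        fun t ht hc => ht (hKq t hc)
      have hqout : (q : ℝ) ∉ Set.Ioo (-q) q := fun hc => lt_irrefl q hc.2
      have hmqout : (-q : ℝ) ∉ Set.Ioo (-q) q := fun hc => lt_irrefl (-q) hc.1
      have hsφq : φ (DegHelper.mk2 a q) = 0 :=
        image_eq_zero_of_notMem_tsupport (hnotK q hqout)
      have hsφmq : φ (DegHelper.mk2 a (-q)) = 0 :=
        image_eq_zero_of_notMem_tsupport (hnotK (-q) hmqout)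
      have hsψq : DegHelper.psi φ (DegHelper.mk2 a q) = 0 :=
        DegHelper.psi_zero_of_nmem _ (hnotK q hqout)
      have hsψmq : DegHelper.psi φ (DegHelper.mk2 a (-q)) = 0 :=
        DegHelper.psi_zero_of_nmem _ (hnotK (-q) hmqout)
      set A1 := (F a (Real.sqrt (1 - a ^ 2)) - F a (-Real.sqrt (1 - a ^ 2)))
        / (2 * Real.sqrt (1 - a ^ 2)) with hA1
      set A2 := (F a (Real.sqrt (1 - a ^ 2)) + F a (-Real.sqrt (1 - a ^ 2))) / 2 with hA2
      have huw : ∀ t : ℝ, u (DegHelper.mk2 a t)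
          = -(A1 * t + A2) + ∫ t' in Set.Iic t, DegHelper.Gg f a t' := by
        intro t
        simp only [hu]
        simp only [show (DegHelper.mk2 a t) 0 = a from rfl,
          show (DegHelper.mk2 a t) 1 = t from rfl]
        simp only [hh]
        rw [← hA1, ← hA2, hFeq]
      have hwd : ∀ t : ℝ, HasDerivAt
          (fun t => -(A1 * t + A2) + ∫ t' in Set.Iic t, DegHelper.Gg f a t')
          (-A1 + DegHelper.Gg f a t) t := by
        intro t
        have h1 := (((hasDerivAt_id t).const_mul A1).add_const A2).neg.add
          (DegHelper.F_FTC hf hf0 hM a t)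
        exact (h1.congr_deriv (by simp)).congr_of_eventuallyEq
          (Filter.Eventually.of_forall fun x => rfl)
      have hw'd : ∀ t ∈ Set.uIcc (-q) q,
          HasDerivAt (fun t => -A1 + DegHelper.Gg f a t) (f (DegHelper.mk2 a t)) t := by
        intro t ht
        rw [Set.uIcc_of_le (by linarith)] at ht
        obtain ⟨h1', h2'⟩ := ht
        have ht2 : t ^ 2 ≤ q ^ 2 := by nlinarith
        have hne : a ^ 2 + t ^ 2 ≠ 1 := by nlinarith
        simpa using (DegHelper.G_FTC hf hf0 hM hne).const_add (-A1)
      have hInt_w' : IntervalIntegrable (fun t => -A1 + DegHelper.Gg f a t) volume (-q) q :=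
        (continuous_const.add (DegHelper.G_cont_right hf hf0 hM a)).intervalIntegrable _ _
      have hInt_sχ : IntervalIntegrable (fun t => pd2 1 1 φ (DegHelper.mk2 a t))
          volume (-q) q :=
        ((DegHelper.pd2_cont hφs).comp (DegHelper.continuous_mk2_right a)).intervalIntegrable _ _
      have hInt_f : IntervalIntegrable (fun t => f (DegHelper.mk2 a t)) volume (-q) q :=
        (DegHelper.slice_integrable hf hf0 hM a).intervalIntegrable
      have hInt_sψ : IntervalIntegrable (fun t => DegHelper.psi φ (DegHelper.mk2 a t))
          volume (-q) q :=
        (((DegHelper.psi_contDiff hφs).continuous).comp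
          (DegHelper.continuous_mk2_right a)).intervalIntegrable _ _
      have hpart1 := intervalIntegral.integral_mul_deriv_eq_deriv_mul
        (u := fun t => -(A1 * t + A2) + ∫ t' in Set.Iic t, DegHelper.Gg f a t')
        (u' := fun t => -A1 + DegHelper.Gg f a t)
        (v := fun t => DegHelper.psi φ (DegHelper.mk2 a t))
        (v' := fun t => pd2 1 1 φ (DegHelper.mk2 a t))
        (a := -q) (b := q)
        (fun x _ => hwd x) (fun x _ => DegHelper.hasDerivAt_slice_psi hφs a x)
        hInt_w' hInt_sχ
      have hpart2 := intervalIntegral.integral_mul_deriv_eq_deriv_mul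
        (u := fun t => -A1 + DegHelper.Gg f a t)
        (u' := fun t => f (DegHelper.mk2 a t))
        (v := fun t => φ (DegHelper.mk2 a t))
        (v' := fun t => DegHelper.psi φ (DegHelper.mk2 a t))
        (a := -q) (b := q)
        hw'd (fun x _ => DegHelper.hasDerivAt_slice_phi hφs a x)
        hInt_f hInt_sψ
      beta_reduce at hpart1 hpart2
      rw [hsψq, hsψmq, mul_zero, mul_zero, sub_zero, zero_sub] at hpart1
      rw [hsφq, hsφmq, mul_zero, mul_zero, sub_zero, zero_sub] at hpart2
      rw [hpart2] at hpart1
      have hsupp1 : Function.support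
          (fun t => u (DegHelper.mk2 a t) * pd2 1 1 φ (DegHelper.mk2 a t))
          ⊆ Set.Ioc (-q) q := by
        intro t ht
        by_contra hmem
        have h2 : DegHelper.mk2 a t ∉ tsupport φ :=
          hnotK t fun hc => hmem ⟨hc.1, le_of_lt hc.2⟩
        refine ht ?_
        show u (DegHelper.mk2 a t) * pd2 1 1 φ (DegHelper.mk2 a t) = 0
        rw [hpd2K _ h2, mul_zero]
      have hsupp2 : Function.support
          (fun t => f (DegHelper.mk2 a t) * φ (DegHelper.mk2 a t))
          ⊆ Set.Ioc (-q) q := by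
        intro t ht
        by_contra hmem
        have h2 : DegHelper.mk2 a t ∉ tsupport φ :=
          hnotK t fun hc => hmem ⟨hc.1, le_of_lt hc.2⟩
        refine ht ?_
        show f (DegHelper.mk2 a t) * φ (DegHelper.mk2 a t) = 0
        rw [image_eq_zero_of_notMem_tsupport h2, mul_zero]
      show (∫ t : ℝ, u (DegHelper.mk2 a t) * pd2 1 1 φ (DegHelper.mk2 a t))
          = ∫ t : ℝ, f (DegHelper.mk2 a t) * φ (DegHelper.mk2 a t)
      calc (∫ t : ℝ, u (DegHelper.mk2 a t) * pd2 1 1 φ (DegHelper.mk2 a t))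
          = ∫ t in (-q)..q, u (DegHelper.mk2 a t) * pd2 1 1 φ (DegHelper.mk2 a t) :=
            (intervalIntegral.integral_eq_integral_of_support_subset hsupp1).symm
        _ = ∫ t in (-q)..q, (-(A1 * t + A2) + ∫ t' in Set.Iic t, DegHelper.Gg f a t')
              * pd2 1 1 φ (DegHelper.mk2 a t) :=
            intervalIntegral.integral_congr fun t _ => by rw [huw t]
        _ = ∫ t in (-q)..q, f (DegHelper.mk2 a t) * φ (DegHelper.mk2 a t) := by
            rw [hpart1]; ring
        _ = ∫ t : ℝ, f (DegHelper.mk2 a t) * φ (DegHelper.mk2 a t) :=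
            intervalIntegral.integral_eq_integral_of_support_subset hsupp2
    · -- empty slice
      have hz : ∀ b : ℝ, DegHelper.mk2 a b ∉ tsupport φ := by
        intro b hc
        have h1 : ‖DegHelper.mk2 a b‖ ≤ r := mem_closedBall_zero_iff.1 (hrK hc)
        nlinarith [DegHelper.norm_mk2_sq a b, norm_nonneg (DegHelper.mk2 a b),
          sq_nonneg b, not_lt.1 ham]
      show (∫ t : ℝ, u (DegHelper.mk2 a t) * pd2 1 1 φ (DegHelper.mk2 a t))
          = ∫ t : ℝ, f (DegHelper.mk2 a t) * φ (DegHelper.mk2 a t)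
      have e1 : ∀ t : ℝ, u (DegHelper.mk2 a t) * pd2 1 1 φ (DegHelper.mk2 a t) = 0 :=
        fun t => by rw [hpd2K _ (hz t), mul_zero]
      have e2 : ∀ t : ℝ, f (DegHelper.mk2 a t) * φ (DegHelper.mk2 a t) = 0 :=
        fun t => by rw [image_eq_zero_of_notMem_tsupport (hz t), mul_zero]
      simp only [e1, e2, integral_zero]
  · -- boundary limits
    intro x₁ hx₁
    have hx2 : x₁ ^ 2 < 1 := by rcases abs_lt.1 hx₁ with ⟨ha, hb⟩; nlinarith
    have hcpos : 0 < Real.sqrt (1 - x₁ ^ 2) := Real.sqrt_pos.2 (by linarith)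
    have hcne : Real.sqrt (1 - x₁ ^ 2) ≠ 0 := ne_of_gt hcpos
    constructor
    · have hcont := hucontAt (WithLp.toLp 2 ![x₁, Real.sqrt (1 - x₁ ^ 2)])
        (show |(WithLp.toLp 2 ![x₁, Real.sqrt (1 - x₁ ^ 2)] : EuclideanSpace ℝ (Fin 2)) 0| < 1 from hx₁)
      have hval : u (WithLp.toLp 2 ![x₁, Real.sqrt (1 - x₁ ^ 2)]) = 0 := by
        simp only [hu]
        simp only [show ((![x₁, Real.sqrt (1 - x₁ ^ 2)] : Fin 2 → ℝ) 0)
            = x₁ from rfl,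
          show ((![x₁, Real.sqrt (1 - x₁ ^ 2)] : Fin 2 → ℝ) 1)
            = Real.sqrt (1 - x₁ ^ 2) from rfl]
        simp only [hh]
        field_simp
        ring
      have ht := hcont.tendsto
      rw [hval] at ht
      exact tendsto_nhdsWithin_of_tendsto_nhds ht
    · have hcont := hucontAt (WithLp.toLp 2 ![x₁, -Real.sqrt (1 - x₁ ^ 2)])
        (show |(WithLp.toLp 2 ![x₁, -Real.sqrt (1 - x₁ ^ 2)] : EuclideanSpace ℝ (Fin 2)) 0| < 1 from hx₁)
      have hval : u (WithLp.toLp 2 ![x₁, -Real.sqrt (1 - x₁ ^ 2)]) = 0 := by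
        simp only [hu]
        simp only [show ((![x₁, -Real.sqrt (1 - x₁ ^ 2)] : Fin 2 → ℝ) 0)
            = x₁ from rfl,
          show ((![x₁, -Real.sqrt (1 - x₁ ^ 2)] : Fin 2 → ℝ) 1)
            = -Real.sqrt (1 - x₁ ^ 2) from rfl]
        simp only [hh]
        field_simp
        ring
      have ht := hcont.tendsto
      rw [hval] at ht
      exact tendsto_nhdsWithin_of_tendsto_nhds ht
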